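/- For n ≥ 2 the Green's function G_n(t,s) of ∂_t² + 2 sech² t − n² satisfies the decay bound: for any 0 < γ < 1 and any f with |f(s)| ≤ M e^{γ|s|}, the solution u(t) = ∫_ℝ G_n(t,s)f(s)ds satisfies sup_t e^{−γ|t|}|u(t)| ≤ (C/n²) M, with C depending only on γ. -/

import Mathlib

open Real MeasureTheory

/-- The Green's function `G_n(t,s)` for `∂_t² + 2 sech² t − n²`, `n ≥ 2`. -/
noncomputable def greenGn (n : ℤ) (t s : ℝ) : ℝ :=
  if t ≤ s then
    (1 / (2 * (n : ℝ) * (1 - (n : ℝ) ^ 2))) * Real.exp ((n : ℝ) * (t - s))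
      * ((n : ℝ) + Real.tanh s) * ((n : ℝ) - Real.tanh t)
  else
    (1 / (2 * (n : ℝ) * (1 - (n : ℝ) ^ 2))) * Real.exp ((n : ℝ) * (s - t))
      * ((n : ℝ) - Real.tanh s) * ((n : ℝ) + Real.tanh t)

/-
Since `|tanh| ≤ 1` and `(n + 1)² / (2n(n² − 1)) = (n + 1) / (2n(n − 1)) ≤ 3 / (2n)`, the Green's
function is dominated by `(3 / (2n)) e^{−n|t−s|}`. With `|s| ≤ |t| + |t − s|`, the integrand of
`e^{−γ|t|} u(t)` is then dominated by `(3M / (2n)) e^{−(n−γ)|t−s|}`, whose integral in `s` is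
`3M / (n(n − γ)) ≤ 6M / n²` because `γ < 1 ≤ n / 2`.
-/

theorem integral_exp_neg_mul_abs {b : ℝ} (hb : 0 < b) :
    ∫ x : ℝ, exp (-(b * |x|)) = 2 / b := by
  rw [integral_comp_abs (f := fun y => exp (-(b * y)))]
  simp_rw [← neg_mul]
  rw [integral_exp_mul_Ioi (neg_lt_zero.2 hb)]
  field_simp
  simp

theorem integral_exp_neg_mul_abs_sub {b : ℝ} (hb : 0 < b) (t : ℝ) :
    ∫ s : ℝ, exp (-(b * |t - s|)) = 2 / b := by
  rw [integral_sub_left_eq_self (fun x => exp (-(b * |x|))) volume t, integral_exp_neg_mul_abs hb]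

theorem integrable_exp_neg_mul_abs_sub {b : ℝ} (hb : 0 < b) (t : ℝ) :
    Integrable fun s : ℝ => exp (-(b * |t - s|)) :=
  .of_integral_ne_zero (by rw [integral_exp_neg_mul_abs_sub hb]; positivity)

theorem abs_integral_mul_le_of_exp_decay {g f : ℝ → ℝ} {A M N γ t : ℝ} (hγ : 0 ≤ γ)
    (hγN : γ < N) (hg : ∀ s, |g s| ≤ A * exp (-(N * |t - s|)))
    (hf : ∀ s, |f s| ≤ M * exp (γ * |s|)) :
    exp (-(γ * |t|)) * |∫ s, g s * f s| ≤ 2 * A * M / (N - γ) := by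
  have hA : 0 ≤ A := by simpa using (abs_nonneg _).trans (hg t)
  have hM : 0 ≤ M := by simpa using (abs_nonneg _).trans (hf 0)
  have hpt : ∀ s, ‖g s * f s‖ ≤ A * M * exp (γ * |t|) * exp (-((N - γ) * |t - s|)) := by
    intro s
    have htri : |s| ≤ |t| + |t - s| := by
      have := abs_sub_abs_le_abs_sub s t
      rw [abs_sub_comm s t] at this
      linarith
    calc ‖g s * f s‖ = |g s| * |f s| := by rw [Real.norm_eq_abs, abs_mul]
      _ ≤ A * exp (-(N * |t - s|)) * (M * exp (γ * |s|)) :=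
        mul_le_mul (hg s) (hf s) (abs_nonneg _) (by positivity)
      _ = A * M * exp (γ * |s| + -(N * |t - s|)) := by rw [exp_add]; ring
      _ ≤ A * M * exp (γ * |t| + -((N - γ) * |t - s|)) := by
        gcongr A * M * exp ?_
        nlinarith
      _ = A * M * exp (γ * |t|) * exp (-((N - γ) * |t - s|)) := by rw [exp_add]; ring
  have hint :=
    (integrable_exp_neg_mul_abs_sub (sub_pos.2 hγN) t).const_mul (A * M * exp (γ * |t|))
  calc exp (-(γ * |t|)) * |∫ s, g s * f s|
      ≤ exp (-(γ * |t|)) * ∫ s, A * M * exp (γ * |t|) * exp (-((N - γ) * |t - s|)) := by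
        gcongr
        exact norm_integral_le_of_norm_le hint (.of_forall hpt)
    _ = 2 * A * M / (N - γ) := by
        rw [integral_const_mul, integral_exp_neg_mul_abs_sub (sub_pos.2 hγN), exp_neg]
        field_simp

theorem abs_greenCoeff_mul_le {N E a b : ℝ} (hN : 2 ≤ N) (hE : 0 ≤ E) (ha : |a| ≤ 1)
    (hb : |b| ≤ 1) :
    |1 / (2 * N * (1 - N ^ 2)) * E * (N + a) * (N + b)| ≤ 3 / (2 * N) * E := by
  have hden : 0 < 2 * N * (N ^ 2 - 1) := by nlinarith
  have hprod : |(N + a) * (N + b)| ≤ (N + 1) * (N + 1) := by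
    rw [abs_mul]
    rw [abs_le] at ha hb
    gcongr <;> exact abs_le.2 ⟨by linarith, by linarith⟩
  have hcoef : (N + 1) * (N + 1) / (2 * N * (N ^ 2 - 1)) ≤ 3 / (2 * N) := by
    rw [div_le_div_iff₀ hden (by positivity)]
    nlinarith
  calc |1 / (2 * N * (1 - N ^ 2)) * E * (N + a) * (N + b)|
      = |(N + a) * (N + b)| / (2 * N * (N ^ 2 - 1)) * E := by
        rw [show 2 * N * (1 - N ^ 2) = -(2 * N * (N ^ 2 - 1)) by ring, mul_assoc _ (N + a),
          abs_mul, abs_mul, abs_of_nonneg hE, one_div, inv_neg, abs_neg, abs_inv,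
          abs_of_pos hden]
        ring
    _ ≤ 3 / (2 * N) * E :=
        mul_le_mul_of_nonneg_right ((div_le_div_of_nonneg_right hprod hden.le).trans hcoef) hE

theorem abs_greenGn_le {n : ℤ} (hn : 2 ≤ n) (t s : ℝ) :
    |greenGn n t s| ≤ 3 / (2 * n) * exp (-(n * |t - s|)) := by
  have hN : (2 : ℝ) ≤ n := by exact_mod_cast hn
  have htanh (x : ℝ) : |tanh x| ≤ 1 := (abs_tanh_lt_one x).le
  unfold greenGn
  split_ifs with hts
  · have hexp : (n : ℝ) * (t - s) = -(n * |t - s|) := by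
      rw [abs_of_nonpos (sub_nonpos.2 hts)]; ring
    rw [hexp, sub_eq_add_neg (n : ℝ) (tanh t)]
    exact abs_greenCoeff_mul_le hN (exp_pos _).le (htanh s) ((abs_neg _).trans_le (htanh t))
  · have hexp : (n : ℝ) * (s - t) = -(n * |t - s|) := by
      rw [abs_of_pos (sub_pos.2 (not_le.1 hts))]; ring
    rw [hexp, sub_eq_add_neg (n : ℝ) (tanh s)]
    exact abs_greenCoeff_mul_le hN (exp_pos _).le ((abs_neg _).trans_le (htanh s)) (htanh t)

/-- Weighted decay estimate for the Green's function of `L − n²`: for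
`0 < γ < 1` there is `C = C(γ)` so that if `|f(s)| ≤ M e^{γ|s|}`, then
`u(t) = ∫ G_n(t,s) f(s) ds` satisfies `sup_t e^{−γ|t|} |u(t)| ≤ (C/n²) M`. -/
theorem greenGn_weighted_bound (γ : ℝ) (hγ0 : 0 < γ) (hγ1 : γ < 1) :
    ∃ C : ℝ, 0 < C ∧ ∀ (n : ℤ), 2 ≤ n → ∀ (M : ℝ) (f : ℝ → ℝ), Measurable f →
      (∀ s : ℝ, |f s| ≤ M * Real.exp (γ * |s|)) →
      ∀ t : ℝ, Real.exp (-(γ * |t|)) * |∫ s, greenGn n t s * f s|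
        ≤ (C / (n : ℝ) ^ 2) * M := by
  refine ⟨6, by norm_num, fun n hn M f _ hf t => ?_⟩
  have hN : (2 : ℝ) ≤ n := by exact_mod_cast hn
  have hM : 0 ≤ M := by simpa using (abs_nonneg _).trans (hf 0)
  calc _ ≤ 2 * (3 / (2 * n)) * M / (n - γ) :=
        abs_integral_mul_le_of_exp_decay hγ0.le (by linarith) (abs_greenGn_le hn t) hf
    _ ≤ 6 / (n : ℝ) ^ 2 * M := by
        rw [div_le_iff₀ (by linarith)]
        field_simp
        nlinarith
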